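/- Let A and B be nonempty closed subsets of ℝⁿ that are intrinsically transversal at x* ∈ A ∩ B with constant κ ∈ (0,1]. Then there exists a neighborhood U of x* such that every sequence of alternating projections (a_k, b_k) between A and B that has at least one iterate in U converges R-linearly to a point b* ∈ A ∩ B, i.e., there exist C > 0 and q ∈ (0,1) with ‖b_k − b*‖ ≤ C·q^k for all k. -/

import Mathlib

open Set Metric Filter Topology RealInnerProductSpace
open scoped ENNReal

variable {E : Type*} [NormedAddCommGroup E] [InnerProductSpace ℝ E]

/-- The (possibly set-valued) metric projection onto a set `S`. -/
noncomputable def projSet (S : Set E) (x : E) : Set E :=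
  {s | s ∈ S ∧ ‖x - s‖ = Metric.infDist x S}

/-- The proximal normal cone to `S` at `s`. -/
def proxNormalCone (S : Set E) (s : E) : Set E :=
  {v | ∃ l : ℝ, 0 ≤ l ∧ ∃ u : E, v = l • u ∧ s ∈ projSet S (s + u)}

/-- `A` and `B` are intrinsically transversal at `x` with constant `κ`. -/
def IntrinsicallyTransversal (A B : Set E) (x : E) (κ : ℝ) : Prop :=
  ∃ U ∈ nhds x, ∀ a ∈ A ∩ U, a ∉ B → ∀ b ∈ B ∩ U, b ∉ A →
    κ ≤ max (Metric.infDist (‖a - b‖⁻¹ • (a - b)) (proxNormalCone B b))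
            (Metric.infDist (‖a - b‖⁻¹ • (a - b)) (-(proxNormalCone A a)))

/-!
Intrinsic transversality makes a single round of projections contract: if `a ∈ A` is near `x*`
and `b ∈ P_B(a)`, then `d_A(b) ≤ (1 - κ²/32) ‖a - b‖`. Were this false, a minimizer `x` of
`‖y - b‖ + (κ/8) ‖y - a‖` over `A` would stay close to `a` while `b - x` is almost a proximal normal
to `A` at `x`. Projecting onto `A` a point slightly beyond `x` in the direction `b - x` gives
`w ∈ A` near `x` carrying a genuine proximal normal close to that direction, while `a - b` is a
proximal normal to `B` at `b` almost parallel to `w - b`; so both distances in the definition of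
intrinsic transversality at `(w, b)` fall below `κ`.

Along the iteration the distances `d_A(b_k)` then shrink by the factor `θ = 1 - κ²/32`, the
quantity `(1 - θ) ‖b_k - x*‖ + 2 d_A(b_k)` never increases so the iterates stay where the
contraction applies, and `(b_k)` is a Cauchy sequence with geometric steps.
-/

lemma norm_sub_le_of_mem_projSet {F : Type*} [NormedAddCommGroup F] {S : Set F} {x s y : F}
    (hs : s ∈ projSet S x) (hy : y ∈ S) : ‖x - s‖ ≤ ‖x - y‖ := by
  rw [hs.2, ← dist_eq_norm]
  exact infDist_le_dist_of_mem hy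

lemma smul_sub_mem_proxNormalCone {S : Set E} {x s : E} (hs : s ∈ projSet S x) {l : ℝ}
    (hl : 0 ≤ l) : l • (x - s) ∈ proxNormalCone S s :=
  ⟨l, hl, x - s, rfl, by rwa [add_sub_cancel]⟩

lemma norm_inv_smul_sub_inv_smul_le {F : Type*} [NormedAddCommGroup F] [NormedSpace ℝ F]
    (u : F) {v : F} (hv : v ≠ 0) :
    ‖‖u‖⁻¹ • u - ‖v‖⁻¹ • v‖ ≤ 2 * ‖u - v‖ / ‖v‖ := by
  have hv' : 0 < ‖v‖ := norm_pos_iff.mpr hv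
  have hsplit : ‖u‖⁻¹ • u - ‖v‖⁻¹ • v = ‖v‖⁻¹ • (u - v) + (‖u‖⁻¹ - ‖v‖⁻¹) • u := by
    rw [smul_sub, sub_smul]; abel
  have hscale : ‖(‖u‖⁻¹ - ‖v‖⁻¹) • u‖ ≤ ‖u - v‖ / ‖v‖ := by
    rcases eq_or_ne u 0 with rfl | hu
    · simp only [smul_zero, norm_zero]; positivity
    have hu' : 0 < ‖u‖ := norm_pos_iff.mpr hu
    have hcancel : (‖u‖⁻¹ - ‖v‖⁻¹) * ‖u‖ * ‖v‖ = ‖v‖ - ‖u‖ := by field_simp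
    rw [norm_smul, Real.norm_eq_abs, le_div_iff₀ hv']
    calc |‖u‖⁻¹ - ‖v‖⁻¹| * ‖u‖ * ‖v‖ = |‖v‖ - ‖u‖| := by
          rw [← hcancel, abs_mul, abs_mul, abs_of_pos hu', abs_of_pos hv']
      _ ≤ ‖u - v‖ := by rw [abs_sub_comm]; exact abs_norm_sub_norm_le u v
  calc ‖‖u‖⁻¹ • u - ‖v‖⁻¹ • v‖
      ≤ ‖‖v‖⁻¹ • (u - v)‖ + ‖(‖u‖⁻¹ - ‖v‖⁻¹) • u‖ := hsplit ▸ norm_add_le _ _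
    _ ≤ ‖u - v‖ / ‖v‖ + ‖u - v‖ / ‖v‖ := by
      rw [norm_smul, norm_inv, norm_norm, inv_mul_eq_div]; linarith
    _ = 2 * ‖u - v‖ / ‖v‖ := by ring

lemma infDist_proxNormalCone_le {B : Set E} {a b : E} (hb : b ∈ projSet B a) (w : E) :
    infDist (‖w - b‖⁻¹ • (w - b)) (proxNormalCone B b) ≤ ‖w - a‖ / ‖w - b‖ := by
  calc infDist (‖w - b‖⁻¹ • (w - b)) (proxNormalCone B b)
      ≤ dist (‖w - b‖⁻¹ • (w - b)) (‖w - b‖⁻¹ • (a - b)) :=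
        infDist_le_dist_of_mem (smul_sub_mem_proxNormalCone hb (by positivity))
    _ = ‖w - a‖ / ‖w - b‖ := by
        rw [dist_eq_norm, ← smul_sub, sub_sub_sub_cancel_right, norm_smul, norm_inv, norm_norm,
          inv_mul_eq_div]

lemma infDist_neg_proxNormalCone_le {A : Set E} {w x b v : E} (hv : v ∈ proxNormalCone A w)
    (hxb : x ≠ b) :
    infDist (‖w - b‖⁻¹ • (w - b)) (-(proxNormalCone A w)) ≤
      2 * ‖w - x‖ / ‖x - b‖ + ‖v - ‖b - x‖⁻¹ • (b - x)‖ := by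
  have hunit : ‖x - b‖⁻¹ • (x - b) = -(‖b - x‖⁻¹ • (b - x)) := by
    rw [← smul_neg, neg_sub, norm_sub_rev]
  calc infDist (‖w - b‖⁻¹ • (w - b)) (-(proxNormalCone A w))
      ≤ dist (‖w - b‖⁻¹ • (w - b)) (-v) := infDist_le_dist_of_mem (Set.neg_mem_neg.mpr hv)
    _ = ‖(‖w - b‖⁻¹ • (w - b) - ‖x - b‖⁻¹ • (x - b)) + (v - ‖b - x‖⁻¹ • (b - x))‖ := by
        rw [dist_eq_norm, hunit]; congr 1; abel
    _ ≤ 2 * ‖w - x‖ / ‖x - b‖ + ‖v - ‖b - x‖⁻¹ • (b - x)‖ := by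
        refine (norm_add_le _ _).trans (add_le_add_left ?_ _)
        simpa using norm_inv_smul_sub_inv_smul_le (w - b) (sub_ne_zero.mpr hxb)

lemma norm_le_of_le_norm_sub_of_norm_smul_sub_le {y z : E} {c t : ℝ} (hc0 : 0 ≤ c) (hc1 : c ≤ 1)
    (ht : 0 < t) (htz : 2 * t ≤ ‖z‖) (hmin : ‖z‖ - c * ‖y‖ ≤ ‖y - z‖)
    (hray : ‖t • (‖z‖⁻¹ • z) - y‖ ≤ t) : ‖y‖ ≤ 4 * c * t := by
  set s := ‖y‖
  set d := ‖z‖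
  have hd : 0 < d := by linarith
  have hunit : ‖t • (d⁻¹ • z)‖ = t := by
    rw [norm_smul, norm_smul, norm_inv, norm_norm, inv_mul_cancel₀ hd.ne',
      Real.norm_of_nonneg ht.le, mul_one]
  have hs2t : s ≤ 2 * t := by
    have := norm_le_norm_add_norm_sub' y (t • (d⁻¹ • z))
    rw [hunit, norm_sub_rev] at this
    linarith
  have hcs : c * s ≤ d := by nlinarith
  -- Square both hypotheses and eliminate `⟪y, z⟫`: this leaves `s ^ 2 ≤ 4 c t s`.
  have hminsq : (d - c * s) ^ 2 ≤ s ^ 2 - 2 * ⟪y, z⟫ + d ^ 2 := by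
    rw [← norm_sub_sq_real]; exact pow_le_pow_left₀ (by linarith) hmin 2
  have hraysq : t ^ 2 - 2 * (t * (d⁻¹ * ⟪y, z⟫)) + s ^ 2 ≤ t ^ 2 := by
    have h := norm_sub_sq_real (t • (d⁻¹ • z)) y
    rw [hunit, real_inner_smul_left, real_inner_smul_left, real_inner_comm] at h
    rw [← h]
    exact pow_le_pow_left₀ (norm_nonneg _) hray 2
  have hinner : d * s ^ 2 ≤ 2 * t * ⟪y, z⟫ := by
    have := mul_le_mul_of_nonneg_left (by linarith : s ^ 2 ≤ 2 * (t * (d⁻¹ * ⟪y, z⟫))) hd.le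
    rwa [show d * (2 * (t * (d⁻¹ * ⟪y, z⟫))) = 2 * t * ⟪y, z⟫ by field_simp] at this
  have hs : s * (s - 4 * c * t) ≤ 0 := by nlinarith [sq_nonneg (c * s)]
  by_contra! hlt
  have := mul_pos (lt_of_le_of_lt (by positivity) hlt) (sub_pos.mpr hlt)
  linarith

lemma exists_proxNormalCone_near_of_le_norm_sub [ProperSpace E] {A : Set E} (hA : IsClosed A)
    {x b : E} (hx : x ∈ A) {c t : ℝ} (hc0 : 0 ≤ c) (hc1 : c ≤ 1) (ht : 0 < t)
    (htd : 2 * t ≤ ‖b - x‖) (hmin : ∀ y ∈ A, ‖b - x‖ - c * ‖y - x‖ ≤ ‖y - b‖) :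
    ∃ w ∈ A, ‖w - x‖ ≤ 4 * c * t ∧
      ∃ v ∈ proxNormalCone A w, ‖v - ‖b - x‖⁻¹ • (b - x)‖ ≤ 4 * c := by
  set u := ‖b - x‖⁻¹ • (b - x)
  have hu : ‖t • u‖ = t := by
    rw [norm_smul, norm_smul, norm_inv, norm_norm, inv_mul_cancel₀ (by linarith),
      Real.norm_of_nonneg ht.le, mul_one]
  set p := x + t • u
  obtain ⟨w, hwA, hw⟩ := hA.exists_infDist_eq_dist ⟨x, hx⟩ p
  have hwp : w ∈ projSet A p := ⟨hwA, by rw [hw, dist_eq_norm]⟩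
  have hray : ‖t • u - (w - x)‖ ≤ t := by
    calc ‖t • u - (w - x)‖ = ‖p - w‖ := by congr 1; simp only [p]; abel
      _ ≤ ‖p - x‖ := norm_sub_le_of_mem_projSet hwp hx
      _ = t := by simpa only [p, add_sub_cancel_left] using hu
  have hwx : ‖w - x‖ ≤ 4 * c * t :=
    norm_le_of_le_norm_sub_of_norm_smul_sub_le hc0 hc1 ht htd
      (by simpa only [sub_sub_sub_cancel_right] using hmin w hwA) hray
  refine ⟨w, hwA, hwx, t⁻¹ • (p - w), smul_sub_mem_proxNormalCone hwp (by positivity), ?_⟩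
  calc ‖t⁻¹ • (p - w) - u‖ = t⁻¹ * ‖w - x‖ := by
        rw [← norm_neg, show -(t⁻¹ • (p - w) - u) = t⁻¹ • (w - x) by
          simp only [p]; rw [smul_sub, smul_add, smul_smul, inv_mul_cancel₀ ht.ne', one_smul,
            smul_sub]; abel]
        rw [norm_smul, norm_inv, Real.norm_of_nonneg ht.le]
    _ ≤ t⁻¹ * (4 * c * t) := by gcongr
    _ = 4 * c := by field_simp

lemma exists_forall_dist_add_mul_dist_le {α : Type*} [MetricSpace α] [ProperSpace α]
    {A : Set α} (hA : IsClosed A) {a : α} (ha : a ∈ A) (b : α) {c : ℝ} (hc : 0 < c) :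
    ∃ x ∈ A, ∀ y ∈ A, dist x b + c * dist x a ≤ dist y b + c * dist y a := by
  have hK : IsCompact (A ∩ closedBall a (dist a b / c)) := (isCompact_closedBall _ _).inter_left hA
  obtain ⟨x, ⟨hxA, -⟩, hmin⟩ := hK.exists_isMinOn ⟨a, ha, mem_closedBall_self (by positivity)⟩
    (by fun_prop : Continuous fun y => dist y b + c * dist y a).continuousOn
  refine ⟨x, hxA, fun y hy => ?_⟩
  by_cases hya : dist y a ≤ dist a b / c
  · exact hmin ⟨hy, hya⟩
  · have hfar : dist a b < c * dist y a := by rw [not_le, div_lt_iff₀' hc] at hya; exact hya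
    have := isMinOn_iff.mp hmin a ⟨ha, mem_closedBall_self (by positivity)⟩
    simp only [dist_self, mul_zero, add_zero] at this
    linarith [dist_nonneg (x := y) (y := b)]

lemma exists_max_infDist_proxNormalCone_lt [ProperSpace E] {A B : Set E} (hA : IsClosed A)
    {a b : E} (ha : a ∈ A) (hb : b ∈ projSet B a) (hab : a ≠ b) {κ : ℝ} (hκ0 : 0 < κ)
    (hκ1 : κ ≤ 1) (hfar : (1 - κ ^ 2 / 32) * ‖a - b‖ < infDist b A) :
    ∃ w ∈ A, ‖w - a‖ < ‖a - b‖ ∧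
      max (infDist (‖w - b‖⁻¹ • (w - b)) (proxNormalCone B b))
        (infDist (‖w - b‖⁻¹ • (w - b)) (-(proxNormalCone A w))) < κ := by
  have hd : 0 < ‖a - b‖ := norm_pos_iff.mpr (sub_ne_zero.mpr hab)
  -- Ekeland-type penalization around `a`.
  obtain ⟨x, hxA, hx⟩ := exists_forall_dist_add_mul_dist_le hA ha b (c := κ / 8) (by positivity)
  simp only [dist_eq_norm, norm_sub_rev x b] at hx
  have hxd : ‖b - x‖ + κ / 8 * ‖x - a‖ ≤ ‖a - b‖ := by simpa using hx a ha
  have hdx : infDist b A ≤ ‖b - x‖ := by rw [← dist_eq_norm]; exact infDist_le_dist_of_mem hxA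
  have hxa : ‖x - a‖ < κ * ‖a - b‖ / 4 := by nlinarith
  have hmin : ∀ y ∈ A, ‖b - x‖ - κ / 8 * ‖y - x‖ ≤ ‖y - b‖ := fun y hy => by
    nlinarith [hx y hy, norm_sub_le_norm_sub_add_norm_sub y x a]
  have hκ2 : κ ^ 2 ≤ κ := by nlinarith
  have hd' : (31 / 32) * ‖a - b‖ < ‖b - x‖ := by nlinarith [mul_le_mul_of_nonneg_right hκ2 hd.le]
  have hbx : 0 < ‖b - x‖ := by linarith
  obtain ⟨w, hwA, hwx, v, hv, hvu⟩ := exists_proxNormalCone_near_of_le_norm_sub hA hxA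
    (c := κ / 8) (t := κ * ‖b - x‖ / 20) (by positivity) (by linarith) (by positivity)
    (by nlinarith) hmin
  have hs : ‖w - x‖ ≤ κ * ‖b - x‖ / 40 := by
    nlinarith [mul_le_mul_of_nonneg_right hκ2 hbx.le]
  have hwa : ‖w - a‖ ≤ ‖w - x‖ + ‖x - a‖ := norm_sub_le_norm_sub_add_norm_sub w x a
  have hwb : ‖b - x‖ - ‖w - x‖ ≤ ‖w - b‖ := by
    have := norm_sub_le_norm_sub_add_norm_sub x w b
    rw [norm_sub_rev x w, norm_sub_rev x b] at this
    linarith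
  refine ⟨w, hwA, by nlinarith, max_lt ?_ ?_⟩
  · calc infDist (‖w - b‖⁻¹ • (w - b)) (proxNormalCone B b) ≤ ‖w - a‖ / ‖w - b‖ :=
          infDist_proxNormalCone_le hb w
      _ < κ := by rw [div_lt_iff₀ (by nlinarith)]; nlinarith
  · have hxb : x ≠ b := fun h => by simp [h] at hbx
    calc infDist (‖w - b‖⁻¹ • (w - b)) (-(proxNormalCone A w))
        ≤ 2 * ‖w - x‖ / ‖x - b‖ + ‖v - ‖b - x‖⁻¹ • (b - x)‖ :=
          infDist_neg_proxNormalCone_le hv hxb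
      _ < κ := by
          rw [norm_sub_rev x b]
          have : 2 * ‖w - x‖ / ‖b - x‖ ≤ κ / 20 := by rw [div_le_iff₀ (by linarith)]; linarith
          linarith

lemma IntrinsicallyTransversal.exists_infDist_le [ProperSpace E] {A B : Set E} {xs : E} {κ : ℝ}
    (h : IntrinsicallyTransversal A B xs κ) (hA : IsClosed A) (hxs : xs ∈ B) (hκ0 : 0 < κ)
    (hκ1 : κ ≤ 1) :
    ∃ r > 0, ∀ a ∈ A, ‖a - xs‖ < r → ∀ b ∈ projSet B a,
      infDist b A ≤ (1 - κ ^ 2 / 32) * ‖a - b‖ := by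
  obtain ⟨U, hU, htr⟩ := h
  obtain ⟨ε, hε, hball⟩ := Metric.mem_nhds_iff.mp hU
  refine ⟨ε / 2, by positivity, fun a ha har b hb => ?_⟩
  by_cases hbA : b ∈ A
  · rw [infDist_zero_of_mem hbA]
    exact mul_nonneg (by nlinarith) (norm_nonneg _)
  by_contra! hfar
  obtain ⟨w, hwA, hwa, hlt⟩ :=
    exists_max_infDist_proxNormalCone_lt hA ha hb (fun h => hbA (h ▸ ha)) hκ0 hκ1 hfar
  have hwB : w ∉ B := fun hwB => by
    have := norm_sub_le_of_mem_projSet hb hwB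
    rw [norm_sub_rev a w] at this
    linarith
  have hab : ‖a - b‖ ≤ ‖a - xs‖ := norm_sub_le_of_mem_projSet hb hxs
  have hmemU : ∀ y, ‖y - a‖ < ε / 2 → y ∈ U := fun y hy => hball <| by
    rw [mem_ball, dist_eq_norm]
    linarith [norm_sub_le_norm_sub_add_norm_sub y a xs]
  exact (htr w ⟨hwA, hmemU w (by linarith)⟩ hwB b
    ⟨hb.1, hmemU b (by rw [norm_sub_rev]; linarith)⟩ hbA).not_gt hlt

section AlternatingProjections

variable {F : Type*} [NormedAddCommGroup F] {A B : Set F} {a b : ℕ → F}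

lemma norm_sub_le_infDist_of_alternating (hb : ∀ k, b k ∈ projSet B (a k))
    (ha : ∀ k, a (k + 1) ∈ projSet A (b k)) (k : ℕ) :
    ‖a (k + 1) - b (k + 1)‖ ≤ infDist (b k) A ∧ ‖b (k + 1) - b k‖ ≤ 2 * infDist (b k) A := by
  have hδ : ‖b k - a (k + 1)‖ = infDist (b k) A := (ha k).2
  have hgap : ‖a (k + 1) - b (k + 1)‖ ≤ infDist (b k) A := by
    rw [← hδ, norm_sub_rev (b k) (a (k + 1))]
    exact norm_sub_le_of_mem_projSet (hb (k + 1)) (hb k).1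
  refine ⟨hgap, ?_⟩
  calc ‖b (k + 1) - b k‖ ≤ ‖b (k + 1) - a (k + 1)‖ + ‖a (k + 1) - b k‖ :=
        norm_sub_le_norm_sub_add_norm_sub _ _ _
    _ = ‖a (k + 1) - b (k + 1)‖ + ‖b k - a (k + 1)‖ := by
        rw [norm_sub_rev (b (k + 1)) (a (k + 1)), norm_sub_rev (a (k + 1)) (b k)]
    _ ≤ 2 * infDist (b k) A := by linarith

variable {xs : F} {θ r : ℝ}
  (hstep : ∀ x ∈ A, ‖x - xs‖ < r → ∀ y ∈ projSet B x, infDist y A ≤ θ * ‖x - y‖)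
  (hb : ∀ k, b k ∈ projSet B (a k)) (ha : ∀ k, a (k + 1) ∈ projSet A (b k))
include hstep hb ha

-- Each step moves `b` by at most `2 d_A (b k)`, which the contraction pays for.
lemma lyapunov_succ_le_of_alternating (hθ0 : 0 ≤ θ) (hθ1 : θ < 1) {k : ℕ}
    (hk : (1 - θ) * ‖b k - xs‖ + 2 * infDist (b k) A < (1 - θ) * r) :
    infDist (b (k + 1)) A ≤ θ * infDist (b k) A ∧
      (1 - θ) * ‖b (k + 1) - xs‖ + 2 * infDist (b (k + 1)) A ≤
        (1 - θ) * ‖b k - xs‖ + 2 * infDist (b k) A := by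
  obtain ⟨hgap, hmove⟩ := norm_sub_le_infDist_of_alternating hb ha k
  have hδ : ‖b k - a (k + 1)‖ = infDist (b k) A := (ha k).2
  have hnear : ‖a (k + 1) - xs‖ < r := by
    have := norm_sub_le_norm_sub_add_norm_sub (a (k + 1)) (b k) xs
    rw [norm_sub_rev (a (k + 1)) (b k), hδ] at this
    nlinarith [infDist_nonneg (x := b k) (s := A)]
  have hcontr : infDist (b (k + 1)) A ≤ θ * infDist (b k) A :=
    (hstep _ (ha k).1 hnear _ (hb (k + 1))).trans (mul_le_mul_of_nonneg_left hgap hθ0)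
  refine ⟨hcontr, ?_⟩
  have := norm_sub_le_norm_sub_add_norm_sub (b (k + 1)) (b k) xs
  nlinarith

lemma infDist_le_pow_mul_of_alternating (hθ0 : 0 ≤ θ) (hθ1 : θ < 1)
    (h0 : (1 - θ) * ‖b 0 - xs‖ + 2 * infDist (b 0) A < (1 - θ) * r) (k : ℕ) :
    (1 - θ) * ‖b k - xs‖ + 2 * infDist (b k) A < (1 - θ) * r ∧
      infDist (b k) A ≤ θ ^ k * infDist (b 0) A := by
  induction k with
  | zero => simpa using h0
  | succ k ih =>
    obtain ⟨hcontr, hdecr⟩ := lyapunov_succ_le_of_alternating hstep hb ha hθ0 hθ1 ih.1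
    refine ⟨hdecr.trans_lt ih.1, hcontr.trans ?_⟩
    rw [pow_succ', mul_assoc]
    exact mul_le_mul_of_nonneg_left ih.2 hθ0

lemma exists_mem_inter_norm_sub_le_mul_pow_of_alternating [CompleteSpace F] (hA : IsClosed A)
    (hB : IsClosed B) (hθ0 : 0 ≤ θ) (hθ1 : θ < 1)
    (h0 : (1 - θ) * ‖b 0 - xs‖ + 2 * infDist (b 0) A < (1 - θ) * r) :
    ∃ p ∈ A ∩ B, ∃ C, ∀ k, ‖b k - p‖ ≤ C * θ ^ k := by
  have hδ k := (infDist_le_pow_mul_of_alternating hstep hb ha hθ0 hθ1 h0 k).2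
  have hdist : ∀ k, dist (b k) (b (k + 1)) ≤ 2 * infDist (b 0) A * θ ^ k := fun k => by
    rw [dist_comm, dist_eq_norm]
    nlinarith [(norm_sub_le_infDist_of_alternating hb ha k).2, hδ k]
  obtain ⟨p, hp⟩ := cauchySeq_tendsto_of_complete (cauchySeq_of_le_geometric θ _ hθ1 hdist)
  have hpB : p ∈ B := hB.mem_of_tendsto hp (Eventually.of_forall fun k => (hb k).1)
  have hδ0 : Tendsto (fun k => infDist (b k) A) atTop (𝓝 0) := by
    refine squeeze_zero (fun _ => infDist_nonneg) hδ ?_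
    simpa using (tendsto_pow_atTop_nhds_zero_of_lt_one hθ0 hθ1).mul_const (infDist (b 0) A)
  have hpA : p ∈ A := (hA.mem_iff_infDist_zero ⟨_, (ha 0).1⟩).mpr <|
    tendsto_nhds_unique (((continuous_infDist_pt A).tendsto p).comp hp) hδ0
  refine ⟨p, ⟨hpA, hpB⟩, 2 * infDist (b 0) A / (1 - θ), fun k => ?_⟩
  rw [← dist_eq_norm, div_mul_eq_mul_div]
  exact dist_le_of_le_geometric_of_tendsto θ _ hθ1 hdist hp k

end AlternatingProjections

lemma exists_pos_forall_le_mul_pow_of_add_le {f : ℕ → ℝ} {C θ : ℝ} (hθ0 : 0 < θ) (hθ1 : θ ≤ 1)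
    (k₀ : ℕ) (h : ∀ j, f (k₀ + j) ≤ C * θ ^ j) : ∃ C' > 0, ∀ k, f k ≤ C' * θ ^ k := by
  set M := ∑ i ∈ Finset.range k₀, |f i| + |C| + 1
  have hMθ : M / θ ^ k₀ * θ ^ k₀ = M := div_mul_cancel₀ M (pow_pos hθ0 k₀).ne'
  refine ⟨M / θ ^ k₀, by positivity, fun k => ?_⟩
  rcases lt_or_ge k k₀ with hk | hk
  · calc f k ≤ ∑ i ∈ Finset.range k₀, |f i| :=
          (le_abs_self _).trans (Finset.single_le_sum (fun i _ => abs_nonneg (f i))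
            (Finset.mem_range.mpr hk))
      _ ≤ M / θ ^ k₀ * θ ^ k₀ := by rw [hMθ]; linarith [abs_nonneg C]
      _ ≤ M / θ ^ k₀ * θ ^ k :=
          mul_le_mul_of_nonneg_left (pow_le_pow_of_le_one hθ0.le hθ1 hk.le) (by positivity)
  · obtain ⟨j, rfl⟩ := Nat.exists_eq_add_of_le hk
    calc f (k₀ + j) ≤ |C| * θ ^ j := (h j).trans (by gcongr; exact le_abs_self C)
      _ ≤ M * θ ^ j := by
          gcongr
          linarith [Finset.sum_nonneg fun i (_ : i ∈ Finset.range k₀) => abs_nonneg (f i)]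
      _ = M / θ ^ k₀ * θ ^ (k₀ + j) := by rw [pow_add, ← mul_assoc, hMθ]

lemma norm_sub_lt_two_mul_of_mem_projSet {F : Type*} [NormedAddCommGroup F] {B : Set F}
    {x y xs : F} (hy : y ∈ projSet B x) (hxs : xs ∈ B) {ρ : ℝ}
    (h : x ∈ ball xs ρ ∨ y ∈ ball xs ρ) : ‖y - xs‖ < 2 * ρ := by
  rcases h with hx | hy'
  · rw [mem_ball, dist_eq_norm] at hx
    have := norm_sub_le_of_mem_projSet hy hxs
    have := norm_sub_le_norm_sub_add_norm_sub y x xs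
    rw [norm_sub_rev y x] at this
    linarith
  · rw [mem_ball, dist_eq_norm] at hy'
    linarith [(norm_nonneg _).trans_lt hy']

theorem stmt17_general {n : ℕ} (A B : Set (EuclideanSpace ℝ (Fin n)))
    (hAc : IsClosed A) (hBc : IsClosed B)
    (xs : EuclideanSpace ℝ (Fin n)) (hxs : xs ∈ A ∩ B)
    (κ : ℝ) (hκ : κ ∈ Set.Ioc (0:ℝ) 1)
    (hit : IntrinsicallyTransversal A B xs κ) :
    ∃ V ∈ nhds xs, ∀ a b : ℕ → EuclideanSpace ℝ (Fin n),
      (∀ k, b k ∈ projSet B (a k)) → (∀ k, a (k + 1) ∈ projSet A (b k)) →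
      (∃ k, a k ∈ V ∨ b k ∈ V) →
      ∃ p ∈ A ∩ B, Filter.Tendsto b Filter.atTop (nhds p) ∧
        ∃ C : ℝ, 0 < C ∧ ∃ q : ℝ, 0 < q ∧ q < 1 ∧
          ∀ k : ℕ, ‖b k - p‖ ≤ C * q ^ k := by
  obtain ⟨hxsA, hxsB⟩ := hxs
  obtain ⟨hκ0, hκ1⟩ := hκ
  obtain ⟨r, hr, hstep⟩ := hit.exists_infDist_le hAc hxsB hκ0 hκ1
  set θ := 1 - κ ^ 2 / 32
  have hθ0 : 0 < θ := by simp only [θ]; nlinarith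
  have hθ1 : 0 < 1 - θ := by simp only [θ, sub_sub_cancel]; positivity
  refine ⟨ball xs ((1 - θ) * r / 6), ball_mem_nhds _ (by positivity), ?_⟩
  rintro a b hb ha ⟨k₀, hk₀⟩
  have hnear := norm_sub_lt_two_mul_of_mem_projSet (hb k₀) hxsB hk₀
  have hδ : infDist (b k₀) A ≤ ‖b k₀ - xs‖ := by
    rw [← dist_eq_norm]; exact infDist_le_dist_of_mem hxsA
  obtain ⟨p, hp, C, hC⟩ := exists_mem_inter_norm_sub_le_mul_pow_of_alternating
    (a := fun j => a (k₀ + j)) (b := fun j => b (k₀ + j)) hstep (fun j => hb _) (fun j => ha _)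
    hAc hBc hθ0.le (by linarith) (by
      simp only [add_zero]
      nlinarith [mul_le_of_le_one_left (norm_nonneg (b k₀ - xs)) (by linarith : 1 - θ ≤ 1)])
  obtain ⟨C', hC', hbound⟩ :=
    exists_pos_forall_le_mul_pow_of_add_le (f := fun k => ‖b k - p‖) hθ0 (by linarith) k₀ hC
  refine ⟨p, hp, ?_, C', hC', θ, hθ0, by linarith, hbound⟩
  refine tendsto_iff_norm_sub_tendsto_zero.mpr (squeeze_zero (fun _ => norm_nonneg _) hbound ?_)
  simpa using (tendsto_pow_atTop_nhds_zero_of_lt_one hθ0.le (by linarith)).const_mul C'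

theorem stmt17 {n : ℕ} (A B : Set (EuclideanSpace ℝ (Fin n)))
    (hAne : A.Nonempty) (hBne : B.Nonempty) (hAc : IsClosed A) (hBc : IsClosed B)
    (xs : EuclideanSpace ℝ (Fin n)) (hxs : xs ∈ A ∩ B)
    (κ : ℝ) (hκ : κ ∈ Set.Ioc (0:ℝ) 1)
    (hit : IntrinsicallyTransversal A B xs κ) :
    ∃ V ∈ nhds xs, ∀ a b : ℕ → EuclideanSpace ℝ (Fin n),
      (∀ k, b k ∈ projSet B (a k)) → (∀ k, a (k + 1) ∈ projSet A (b k)) →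
      (∃ k, a k ∈ V ∨ b k ∈ V) →
      ∃ p ∈ A ∩ B, Filter.Tendsto b Filter.atTop (nhds p) ∧
        ∃ C : ℝ, 0 < C ∧ ∃ q : ℝ, 0 < q ∧ q < 1 ∧
          ∀ k : ℕ, ‖b k - p‖ ≤ C * q ^ k :=
  stmt17_general A B hAc hBc xs hxs κ hκ hit
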